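/- (Correctness of the anonymous bit transmission protocol.) Let n ≥ 1, let s ∈ Fin n be the sender, and let m ∈ {0,1} be the bit to transmit. Let ψ = ψ_W if m = 0 and ψ = X_{{s}} ψ_W if m = 1. Then every bitstring x with ψ(x) ≠ 0 has Hamming weight k satisfying k ≡ 1 + m (mod 2); hence the bit is correctly decoded from the total number k of 1's among the broadcast outcomes as m = 0 when k is odd and m = 1 when k is even. -/

import Mathlib

/-- Hamming weight of a bitstring. -/
def hammingWt {n : ℕ} (x : Fin n → ZMod 2) : ℕ :=
  (Finset.univ.filter fun i => x i = 1).card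

/-- The `n`-qubit W state: amplitude `1/√n` on each Hamming-weight-1 bitstring. -/
noncomputable def wState (n : ℕ) : EuclideanSpace ℂ (Fin n → ZMod 2) :=
  WithLp.toLp 2 fun x => if hammingWt x = 1 then ((1 / Real.sqrt n : ℝ) : ℂ) else 0

/-- Indicator bitstring of a set of qubits. -/
def chi {n : ℕ} (S : Finset (Fin n)) : Fin n → ZMod 2 :=
  fun i => if i ∈ S then 1 else 0

/-- Pauli-X flip on the qubits in `S`. -/
noncomputable def pauliX {n : ℕ} (S : Finset (Fin n))
    (ψ : EuclideanSpace ℂ (Fin n → ZMod 2)) : EuclideanSpace ℂ (Fin n → ZMod 2) :=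
  WithLp.toLp 2 fun x => ψ (x + chi S)

/-- Bitstring with a single 1 in position `i`. -/
def eVec {n : ℕ} (i : Fin n) : Fin n → ZMod 2 :=
  fun j => if j = i then 1 else 0

/-!
Hamming weight mod 2 is additive on `(ZMod 2)ⁿ`, being the sum of the coordinates. The W state
is supported on weight-1 strings, so its outcomes have odd weight; flipping one qubit shifts
every weight by one mod 2, so the outcomes of `X_{s} ψ_W` have even weight.
-/

lemma hammingWt_cast {n : ℕ} (x : Fin n → ZMod 2) : (hammingWt x : ZMod 2) = ∑ i, x i := by
  rw [hammingWt, Finset.card_eq_sum_ones, Nat.cast_sum, Finset.sum_filter]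
  refine Finset.sum_congr rfl fun i _ => ?_
  generalize x i = a
  fin_cases a <;> rfl

lemma hammingWt_add_cast {n : ℕ} (x y : Fin n → ZMod 2) :
    (hammingWt (x + y) : ZMod 2) = hammingWt x + hammingWt y := by
  simp only [hammingWt_cast, Pi.add_apply, Finset.sum_add_distrib]

lemma hammingWt_chi {n : ℕ} (S : Finset (Fin n)) : hammingWt (chi S) = S.card := by
  simp [hammingWt, chi]

lemma hammingWt_eq_one_of_wState_ne_zero {n : ℕ} {x : Fin n → ZMod 2} (h : wState n x ≠ 0) :
    hammingWt x = 1 := by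
  by_contra hx
  simp [wState, hx] at h

lemma pauliX_apply {n : ℕ} (S : Finset (Fin n)) (ψ : EuclideanSpace ℂ (Fin n → ZMod 2))
    (x : Fin n → ZMod 2) : pauliX S ψ x = ψ (x + chi S) := rfl

lemma hammingWt_cast_of_pauliX_wState_ne_zero {n : ℕ} {S : Finset (Fin n)}
    {x : Fin n → ZMod 2} (h : pauliX S (wState n) x ≠ 0) :
    (hammingWt x : ZMod 2) = 1 + S.card := by
  have hflip := hammingWt_eq_one_of_wState_ne_zero (pauliX_apply S _ x ▸ h)
  have hcast := congrArg (fun k : ℕ => (k : ZMod 2)) hflip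
  simp only [hammingWt_add_cast, hammingWt_chi, Nat.cast_one] at hcast
  have htwo : (2 : ZMod 2) = 0 := rfl
  linear_combination hcast - (S.card : ZMod 2) * htwo

lemma bit_eq_of_modEq_one_add {k m : ℕ} (hk : k ≡ 1 + m [MOD 2]) (hm : m ≤ 1) :
    (Odd k → m = 0) ∧ (Even k → m = 1) := by
  rw [Nat.ModEq] at hk
  constructor <;> intro h
  · rw [Nat.odd_iff] at h; omega
  · rw [Nat.even_iff] at h; omega

theorem stmt6_general (n : ℕ) (s : Fin n) (m : ℕ) (hm : m ≤ 1) :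
    ∀ x : Fin n → ZMod 2,
      (if m = 0 then wState n else pauliX {s} (wState n)) x ≠ 0 →
      hammingWt x ≡ 1 + m [MOD 2] ∧
      (Odd (hammingWt x) → m = 0) ∧ (Even (hammingWt x) → m = 1) := by
  intro x hx
  have hwt : (hammingWt x : ZMod 2) = ((1 + m : ℕ) : ZMod 2) := by
    interval_cases m
    · simp [hammingWt_eq_one_of_wState_ne_zero (if_pos rfl ▸ hx)]
    · rw [if_neg one_ne_zero] at hx
      rw [hammingWt_cast_of_pauliX_wState_ne_zero hx, Finset.card_singleton]
      norm_num
  have hmod := (ZMod.natCast_eq_natCast_iff _ _ _).mp hwt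
  exact ⟨hmod, bit_eq_of_modEq_one_add hmod hm⟩

theorem stmt6 (n : ℕ) (hn : 1 ≤ n) (s : Fin n) (m : ℕ) (hm : m ≤ 1) :
    ∀ x : Fin n → ZMod 2,
      (if m = 0 then wState n else pauliX {s} (wState n)) x ≠ 0 →
      hammingWt x ≡ 1 + m [MOD 2] ∧
      (Odd (hammingWt x) → m = 0) ∧ (Even (hammingWt x) → m = 1) :=
  stmt6_general n s m hm
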